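/- arXiv:1002.3099 — 6 statements merged into one kernel-verified Lean document; each statement's English description precedes it below -/
import Mathlib

section
/- Let g be a finite-dimensional real Lie algebra with center ξ, endowed with a complex structure J (an ℝ-linear map J : g → g with J∘J = −id satisfying the integrability condition [X,Y] − [JX,JY] + J[JX,Y] + J[X,JY] = 0 for all X,Y). If Jξ ∩ [g,g] ≠ {0}, then (g,J) admits no Hermitian-symplectic structure, i.e. there is no alternating bilinear form Ω : g × g → ℝ satisfying Ω([X,Y],Z) + Ω([Y,Z],X) + Ω([Z,X],Y) = 0 for all X,Y,Z ∈ g and Ω(X,JX) > 0 for every nonzero X ∈ g. -/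
/-! For a closed 2-form `Ω` and a central `X`, the cocycle identity collapses to `Ω ⁅A, B⁆ X = 0`,
so `Ω` pairs `X` trivially with all of `[g, g]`. If `J X ∈ [g, g]`, this gives `Ω X (J X) = 0`,
which tameness forbids. -/

section ClosedForm

variable {R g : Type*} [CommRing R] [LieRing g] [LieAlgebra R g]
  {Ω : g →ₗ[R] g →ₗ[R] R}

theorem closed_form_apply_lie_of_forall_lie_eq_zero
    (hclosed : ∀ X Y Z : g, Ω ⁅X, Y⁆ Z + Ω ⁅Y, Z⁆ X + Ω ⁅Z, X⁆ Y = 0)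
    {X : g} (hX : ∀ Y : g, ⁅X, Y⁆ = 0) (A B : g) : Ω ⁅A, B⁆ X = 0 := by
  have hBX : ⁅B, X⁆ = 0 := by rw [← lie_skew, hX, neg_zero]
  simpa [hBX, hX A] using hclosed A B X

theorem closed_form_apply_eq_zero_of_mem_span_lie
    (hclosed : ∀ X Y Z : g, Ω ⁅X, Y⁆ Z + Ω ⁅Y, Z⁆ X + Ω ⁅Z, X⁆ Y = 0)
    {X : g} (hX : ∀ Y : g, ⁅X, Y⁆ = 0) {W : g}
    (hW : W ∈ Submodule.span R {Z : g | ∃ A B : g, ⁅A, B⁆ = Z}) : Ω W X = 0 := by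
  have hspan :
      Submodule.span R {Z : g | ∃ A B : g, ⁅A, B⁆ = Z} ≤ LinearMap.ker (Ω.flip X) := by
    rw [Submodule.span_le]
    rintro Z ⟨A, B, rfl⟩
    exact closed_form_apply_lie_of_forall_lie_eq_zero hclosed hX A B
  exact hspan hW

end ClosedForm

theorem no_hermitian_symplectic_of_center_condition_general
    {g : Type*} [LieRing g] [LieAlgebra ℝ g]
    (J : g →ₗ[ℝ] g)
    (hcenter : ∃ W : g, W ≠ 0 ∧
        (∃ X : g, (∀ Y : g, ⁅X, Y⁆ = 0) ∧ J X = W) ∧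
        W ∈ Submodule.span ℝ {Z : g | ∃ A B : g, ⁅A, B⁆ = Z}) :
    ¬ ∃ Ω : g →ₗ[ℝ] g →ₗ[ℝ] ℝ,
        (∀ X Y : g, Ω X Y = - Ω Y X) ∧
        (∀ X Y Z : g, Ω ⁅X, Y⁆ Z + Ω ⁅Y, Z⁆ X + Ω ⁅Z, X⁆ Y = 0) ∧
        (∀ X : g, X ≠ 0 → 0 < Ω X (J X)) := by
  rintro ⟨Ω, hskew, hclosed, htame⟩
  obtain ⟨_, hW0, ⟨X, hXcen, rfl⟩, hWspan⟩ := hcenter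
  have hX0 : X ≠ 0 := by
    rintro rfl
    exact hW0 (map_zero J)
  have hvanish : Ω X (J X) = 0 := by
    rw [hskew, closed_form_apply_eq_zero_of_mem_span_lie hclosed hXcen hWspan, neg_zero]
  exact (htame X hX0).ne' hvanish

/-- If `g` is a finite-dimensional real Lie algebra with a complex structure `J`
such that `J ξ ∩ [g,g] ≠ {0}` (where `ξ` is the center), then `(g, J)` admits no
Hermitian-symplectic structure. -/
theorem no_hermitian_symplectic_of_center_condition
    {g : Type*} [LieRing g] [LieAlgebra ℝ g] [FiniteDimensional ℝ g]
    (J : g →ₗ[ℝ] g)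
    (hJ2 : ∀ X : g, J (J X) = -X)
    (hJint : ∀ X Y : g, ⁅X, Y⁆ - ⁅J X, J Y⁆ + J ⁅J X, Y⁆ + J ⁅X, J Y⁆ = 0)
    (hcenter : ∃ W : g, W ≠ 0 ∧
        (∃ X : g, (∀ Y : g, ⁅X, Y⁆ = 0) ∧ J X = W) ∧
        W ∈ Submodule.span ℝ {Z : g | ∃ A B : g, ⁅A, B⁆ = Z}) :
    ¬ ∃ Ω : g →ₗ[ℝ] g →ₗ[ℝ] ℝ,
        (∀ X Y : g, Ω X Y = - Ω Y X) ∧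
        (∀ X Y Z : g, Ω ⁅X, Y⁆ Z + Ω ⁅Y, Z⁆ X + Ω ⁅Z, X⁆ Y = 0) ∧
        (∀ X : g, X ≠ 0 → 0 < Ω X (J X)) :=
  no_hermitian_symplectic_of_center_condition_general J hcenter
end

section
/- Let g be a real Lie algebra with a complex structure J and a J-compatible inner product ⟨·,·⟩, let c be the associated Bismut torsion 3-form and dc its Chevalley–Eilenberg differential. If X belongs to the center ξ of g, then for every Y ∈ g: dc(X, Y, JX, JY) = 2( ‖[Y,JX]‖² − ⟨[[JX,Y],JX], Y⟩ − ⟨[[Y,JY],JX], X⟩ ), where ‖Z‖² = ⟨Z,Z⟩. -/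
/-!
For central `X`, integrability of `J` at `(X, Z)` says exactly that `ad (J X)` commutes with `J`.
Then only three terms of `dc(X, Y, JX, JY)` survive; using `J`-invariance of `B`, each is an
explicit combination of `‖[JX, Y]‖²`, `⟨[[JX, Y], JX], Y⟩` and a pairing with `X`, and the pairings
with `X` add up to `-2⟨[[Y, JY], JX], X⟩` by the Leibniz rule for `ad (J X)`.
-/

/-- The Bismut torsion 3-form of a complex structure `J` and a `J`-compatible inner
product `B` on a Lie algebra: `c(X,Y,Z) = −⟨[JX,JY],Z⟩ − ⟨[JY,JZ],X⟩ − ⟨[JZ,JX],Y⟩`. -/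
def bismutC {g R : Type*} [LieRing g] [Ring R] (B : g → g → R) (J : g → g)
    (X Y Z : g) : R :=
  - B ⁅J X, J Y⁆ Z - B ⁅J Y, J Z⁆ X - B ⁅J Z, J X⁆ Y

/-- The Chevalley–Eilenberg differential of a 3-form `c` on a Lie algebra. -/
def dC {g R : Type*} [LieRing g] [Ring R] (c : g → g → g → R) (X Y Z W : g) : R :=
  - c ⁅X, Y⁆ Z W + c ⁅X, Z⁆ Y W - c ⁅X, W⁆ Y Z
    - c ⁅Y, Z⁆ X W + c ⁅Y, W⁆ X Z - c ⁅Z, W⁆ X Y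

theorem dC_of_forall_lie_eq_zero {g R : Type*} [LieRing g] [Ring R] {c : g → g → g → R}
    (hc : ∀ Y Z, c 0 Y Z = 0) {X : g} (hX : ∀ Y : g, ⁅X, Y⁆ = 0) (Y Z W : g) :
    dC c X Y Z W = - c ⁅Y, Z⁆ X W + c ⁅Y, W⁆ X Z - c ⁅Z, W⁆ X Y := by
  simp only [dC, hX, hc]
  abel

section Central

variable {R g : Type*} [CommRing R] [LieRing g] [LieAlgebra R g]
  {J : g →ₗ[R] g} {X : g}

theorem lie_J_J_eq_J_lie_of_center
    (hJint : ∀ X Y : g, ⁅X, Y⁆ - ⁅J X, J Y⁆ + J ⁅J X, Y⁆ + J ⁅X, J Y⁆ = 0)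
    (hX : ∀ Y : g, ⁅X, Y⁆ = 0) (Z : g) : ⁅J X, J Z⁆ = J ⁅J X, Z⁆ := by
  have h := hJint X Z
  rwa [hX, hX, map_zero, zero_sub, add_zero, neg_add_eq_zero] at h

variable {B : g →ₗ[R] g →ₗ[R] R}

theorem bismutC_zero_left (Y Z : g) : bismutC (fun a b => B a b) J 0 Y Z = 0 := by
  simp [bismutC]

theorem bismutC_lie_J_center_center_J (hJ2 : ∀ Z, J (J Z) = -Z)
    (hcompat : ∀ Z W, B (J Z) (J W) = B Z W) (hJX : ∀ Z, ⁅J X, J Z⁆ = J ⁅J X, Z⁆)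
    (Y : g) :
    bismutC (fun a b => B a b) J ⁅Y, J X⁆ X (J Y) =
      B ⁅⁅J X, Y⁆, J X⁆ Y - B ⁅J X, Y⁆ ⁅J X, Y⁆ - B ⁅Y, J ⁅J X, Y⁆⁆ X := by
  have hJX' : ⁅J ⁅Y, J X⁆, J X⁆ = J ⁅⁅Y, J X⁆, J X⁆ := by
    rw [← lie_skew, hJX, ← map_neg, lie_skew]
  simp only [bismutC, hJX', hcompat, hJ2, neg_lie, map_neg, LinearMap.neg_apply]
  rw [← lie_skew Y (J X)]
  simp only [lie_neg, neg_lie, map_neg, LinearMap.neg_apply]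
  ring

theorem bismutC_lie_J_self_center_J_center (hJ2 : ∀ Z, J (J Z) = -Z)
    (hcompat : ∀ Z W, B (J Z) (J W) = B Z W) (hJX : ∀ Z, ⁅J X, J Z⁆ = J ⁅J X, Z⁆)
    (hX : ∀ Y : g, ⁅X, Y⁆ = 0) (Y : g) :
    bismutC (fun a b => B a b) J ⁅Y, J Y⁆ X (J X) = B ⁅J X, ⁅Y, J Y⁆⁆ X := by
  have hXJX : ⁅J X, X⁆ = 0 := by rw [← lie_skew, hX, neg_zero]
  simp only [bismutC, hJ2, neg_lie, lie_neg, hX, hXJX, map_zero, neg_zero,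
    LinearMap.zero_apply]
  rw [← lie_skew, hJX, map_neg, LinearMap.neg_apply, hcompat]
  ring

theorem bismutC_lie_J_J_center (hJ2 : ∀ Z, J (J Z) = -Z)
    (hcompat : ∀ Z W, B (J Z) (J W) = B Z W) (hJX : ∀ Z, ⁅J X, J Z⁆ = J ⁅J X, Z⁆)
    (Y : g) :
    bismutC (fun a b => B a b) J ⁅J X, J Y⁆ X Y =
      B ⁅⁅J X, Y⁆, J X⁆ Y - B ⁅J X, Y⁆ ⁅J X, Y⁆ + B ⁅J Y, ⁅J X, Y⁆⁆ X := by
  simp only [bismutC, hJX, hJ2, hcompat, lie_neg, neg_lie, map_neg, LinearMap.neg_apply]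
  ring

end Central

theorem dc_center_formula_general
    {g : Type*} [LieRing g] [LieAlgebra ℝ g]
    (J : g →ₗ[ℝ] g)
    (hJ2 : ∀ X : g, J (J X) = -X)
    (hJint : ∀ X Y : g, ⁅X, Y⁆ - ⁅J X, J Y⁆ + J ⁅J X, Y⁆ + J ⁅X, J Y⁆ = 0)
    (B : g →ₗ[ℝ] g →ₗ[ℝ] ℝ)
    (hcompat : ∀ X Y : g, B (J X) (J Y) = B X Y)
    (X : g) (hX : ∀ Y : g, ⁅X, Y⁆ = 0) :
    ∀ Y : g,
      dC (bismutC (fun a b => B a b) J) X Y (J X) (J Y) =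
        2 * (B ⁅Y, J X⁆ ⁅Y, J X⁆ - B ⁅⁅J X, Y⁆, J X⁆ Y - B ⁅⁅Y, J Y⁆, J X⁆ X) := by
  intro Y
  have hJX := lie_J_J_eq_J_lie_of_center hJint hX
  have hleibniz : ⁅J X, ⁅Y, J Y⁆⁆ = -⁅J Y, ⁅J X, Y⁆⁆ + ⁅Y, J ⁅J X, Y⁆⁆ := by
    rw [leibniz_lie, hJX, ← lie_skew]
  rw [dC_of_forall_lie_eq_zero bismutC_zero_left hX,
    bismutC_lie_J_center_center_J hJ2 hcompat hJX,
    bismutC_lie_J_self_center_J_center hJ2 hcompat hJX hX,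
    bismutC_lie_J_J_center hJ2 hcompat hJX,
    ← lie_skew ⁅Y, J Y⁆ (J X), hleibniz, ← lie_skew Y (J X)]
  simp only [map_add, map_neg, LinearMap.add_apply, LinearMap.neg_apply, neg_neg]
  ring

/-- for `X` in the center of `g`,
`dc(X, Y, JX, JY) = 2(‖[Y,JX]‖² − ⟨[[JX,Y],JX],Y⟩ − ⟨[[Y,JY],JX],X⟩)`. -/
theorem dc_center_formula
    {g : Type*} [LieRing g] [LieAlgebra ℝ g] [FiniteDimensional ℝ g]
    (J : g →ₗ[ℝ] g)
    (hJ2 : ∀ X : g, J (J X) = -X)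
    (hJint : ∀ X Y : g, ⁅X, Y⁆ - ⁅J X, J Y⁆ + J ⁅J X, Y⁆ + J ⁅X, J Y⁆ = 0)
    (B : g →ₗ[ℝ] g →ₗ[ℝ] ℝ)
    (hsymm : ∀ X Y : g, B X Y = B Y X)
    (hpos : ∀ X : g, X ≠ 0 → 0 < B X X)
    (hcompat : ∀ X Y : g, B (J X) (J Y) = B X Y)
    (X : g) (hX : ∀ Y : g, ⁅X, Y⁆ = 0) :
    ∀ Y : g,
      dC (bismutC (fun a b => B a b) J) X Y (J X) (J Y) =
        2 * (B ⁅Y, J X⁆ ⁅Y, J X⁆ - B ⁅⁅J X, Y⁆, J X⁆ Y - B ⁅⁅Y, J Y⁆, J X⁆ X) :=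
  dc_center_formula_general J hJ2 hJint B hcompat X hX
end

section
/- Let g be a finite-dimensional real Lie algebra with a complex structure J, and let Ω be a Hermitian-symplectic structure on (g,J). Define g_Ω(X,Y) = ½( Ω(X,JY) + Ω(Y,JX) ). Then g_Ω is a symmetric positive-definite bilinear form on g satisfying g_Ω(JX,JY) = g_Ω(X,Y) for all X,Y, and the Bismut torsion 3-form c of (J, g_Ω) is closed, i.e. dc = 0; thus g_Ω is a J-compatible SKT inner product on (g,J). -/
def dTwo {g R : Type*} [LieRing g] [Ring R] (φ : g → g → R) (X Y Z : g) : R :=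
  - φ ⁅X, Y⁆ Z + φ ⁅X, Z⁆ Y - φ ⁅Y, Z⁆ X

section CommRing

variable {R g : Type*} [CommRing R] [LieRing g] [LieAlgebra R g]

theorem dC_dTwo_eq_zero {φ : g →ₗ[R] g →ₗ[R] R} (hφ : ∀ X Y, φ X Y = - φ Y X)
    (X Y Z W : g) : dC (dTwo (φ · ·)) X Y Z W = 0 := by
  have jacobi (A B C S : g) : φ ⁅⁅A, B⁆, C⁆ S - φ ⁅⁅A, C⁆, B⁆ S + φ ⁅⁅B, C⁆, A⁆ S = 0 := by
    have h : ⁅⁅A, B⁆, C⁆ - ⁅⁅A, C⁆, B⁆ + ⁅⁅B, C⁆, A⁆ = 0 := by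
      rw [← lie_skew ⁅A, C⁆ B, ← lie_skew ⁅B, C⁆ A, leibniz_lie A B C]
      abel
    rw [← LinearMap.sub_apply, ← LinearMap.add_apply, ← map_sub, ← map_add, h, map_zero,
      LinearMap.zero_apply]
  simp only [dC, dTwo]
  linear_combination jacobi X Y Z W - jacobi X Y W Z + jacobi X Z W Y - jacobi Y Z W X
    + hφ ⁅Z, W⁆ ⁅X, Y⁆ - hφ ⁅Y, W⁆ ⁅X, Z⁆ + hφ ⁅Y, Z⁆ ⁅X, W⁆

theorem lie_J_add_lie_J {J : g →ₗ[R] g} (hJ2 : ∀ X : g, J (J X) = -X)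
    (hJint : ∀ X Y : g, ⁅X, Y⁆ - ⁅J X, J Y⁆ + J ⁅J X, Y⁆ + J ⁅X, J Y⁆ = 0) (X Y : g) :
    ⁅J X, Y⁆ + ⁅X, J Y⁆ = J ⁅X, Y⁆ - J ⁅J X, J Y⁆ := by
  have h := congrArg J (hJint X Y)
  simp only [map_add, map_sub, hJ2, map_zero] at h
  linear_combination (norm := module) -h

end CommRing

section Field

variable {K g : Type*} [Field K] [LieRing g] [LieAlgebra K g]

def hermitianMetric (Ω : g →ₗ[K] g →ₗ[K] K) (J : g →ₗ[K] g) (X Y : g) : K :=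
  (Ω X (J Y) + Ω Y (J X)) / 2

def torsionPotential (Ω : g →ₗ[K] g →ₗ[K] K) (J : g →ₗ[K] g) : g →ₗ[K] g →ₗ[K] K :=
  -(2⁻¹ : K) • (Ω ∘ₗ J + Ω.compl₂ J)

variable {Ω : g →ₗ[K] g →ₗ[K] K} {J : g →ₗ[K] g}

theorem hermitianMetric_comm (X Y : g) : hermitianMetric Ω J X Y = hermitianMetric Ω J Y X := by
  rw [hermitianMetric, hermitianMetric, add_comm]

theorem hermitianMetric_self [NeZero (2 : K)] (X : g) : hermitianMetric Ω J X X = Ω X (J X) :=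
  add_self_div_two _

theorem hermitianMetric_map_J (hJ2 : ∀ X : g, J (J X) = -X)
    (halt : ∀ X Y : g, Ω X Y = - Ω Y X) (X Y : g) :
    hermitianMetric Ω J (J X) (J Y) = hermitianMetric Ω J X Y := by
  simp only [hermitianMetric, hJ2, map_neg]
  linear_combination (-1 / 2 : K) * (halt (J X) Y + halt (J Y) X)

theorem torsionPotential_antisymm (halt : ∀ X Y : g, Ω X Y = - Ω Y X) (X Y : g) :
    torsionPotential Ω J X Y = - torsionPotential Ω J Y X := by
  simp only [torsionPotential, LinearMap.smul_apply, LinearMap.add_apply, LinearMap.comp_apply,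
    LinearMap.compl₂_apply, smul_eq_mul]
  linear_combination (-1 / 2 : K) * (halt (J X) Y + halt X (J Y))

theorem bismutC_hermitianMetric_eq_dTwo (hJ2 : ∀ X : g, J (J X) = -X)
    (hJint : ∀ X Y : g, ⁅X, Y⁆ - ⁅J X, J Y⁆ + J ⁅J X, Y⁆ + J ⁅X, J Y⁆ = 0)
    (halt : ∀ X Y : g, Ω X Y = - Ω Y X)
    (hclosed : ∀ X Y Z : g, Ω ⁅X, Y⁆ Z + Ω ⁅Y, Z⁆ X + Ω ⁅Z, X⁆ Y = 0) :
    bismutC (hermitianMetric Ω J) J = dTwo (torsionPotential Ω J · ·) := by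
  funext X Y Z
  have hint (X Y Z : g) := congrArg (Ω · Z) (lie_J_add_lie_J hJ2 hJint X Y)
  simp only [map_add, map_sub, LinearMap.add_apply, LinearMap.sub_apply] at hint
  simp only [bismutC, hermitianMetric, dTwo, torsionPotential, ← lie_skew X Z, map_neg,
    LinearMap.neg_apply, LinearMap.smul_apply, LinearMap.add_apply, LinearMap.comp_apply,
    LinearMap.compl₂_apply, smul_eq_mul]
  linear_combination (1 / 2 : K) * (hint X Y Z + hint Y Z X + hint Z X Y
    - hclosed (J X) (J Y) (J Z) - hclosed X Y (J Z) - hclosed Y Z (J X) - hclosed Z X (J Y)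
    - halt Z (J ⁅J X, J Y⁆) - halt X (J ⁅J Y, J Z⁆) - halt Y (J ⁅J Z, J X⁆))

end Field

theorem hermitian_symplectic_gives_SKT_general
    {g : Type*} [LieRing g] [LieAlgebra ℝ g]
    (J : g →ₗ[ℝ] g)
    (hJ2 : ∀ X : g, J (J X) = -X)
    (hJint : ∀ X Y : g, ⁅X, Y⁆ - ⁅J X, J Y⁆ + J ⁅J X, Y⁆ + J ⁅X, J Y⁆ = 0)
    (Ω : g →ₗ[ℝ] g →ₗ[ℝ] ℝ)
    (halt : ∀ X Y : g, Ω X Y = - Ω Y X)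
    (hclosed : ∀ X Y Z : g, Ω ⁅X, Y⁆ Z + Ω ⁅Y, Z⁆ X + Ω ⁅Z, X⁆ Y = 0)
    (htame : ∀ X : g, X ≠ 0 → 0 < Ω X (J X))
    (gΩ : g → g → ℝ)
    (hgΩ : ∀ X Y : g, gΩ X Y = (Ω X (J Y) + Ω Y (J X)) / 2) :
    (∀ X Y : g, gΩ X Y = gΩ Y X) ∧
    (∀ X : g, X ≠ 0 → 0 < gΩ X X) ∧
    (∀ X Y : g, gΩ (J X) (J Y) = gΩ X Y) ∧
    (∀ X Y Z W : g, dC (bismutC gΩ J) X Y Z W = 0) := by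
  obtain rfl : gΩ = hermitianMetric Ω J := funext₂ hgΩ
  refine ⟨hermitianMetric_comm, fun X hX => ?_, hermitianMetric_map_J hJ2 halt, fun X Y Z W => ?_⟩
  · rw [hermitianMetric_self]
    exact htame X hX
  · rw [bismutC_hermitianMetric_eq_dTwo hJ2 hJint halt hclosed]
    exact dC_dTwo_eq_zero (torsionPotential_antisymm halt) X Y Z W

/-- if `Ω` is a Hermitian-symplectic structure on `(g, J)`, then
`g_Ω(X,Y) = ½(Ω(X,JY) + Ω(Y,JX))` is a symmetric, positive-definite, `J`-compatible
bilinear form whose Bismut torsion 3-form is closed, i.e. `g_Ω` is a `J`-compatible SKT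
inner product on `(g, J)`. -/
theorem hermitian_symplectic_gives_SKT
    {g : Type*} [LieRing g] [LieAlgebra ℝ g] [FiniteDimensional ℝ g]
    (J : g →ₗ[ℝ] g)
    (hJ2 : ∀ X : g, J (J X) = -X)
    (hJint : ∀ X Y : g, ⁅X, Y⁆ - ⁅J X, J Y⁆ + J ⁅J X, Y⁆ + J ⁅X, J Y⁆ = 0)
    (Ω : g →ₗ[ℝ] g →ₗ[ℝ] ℝ)
    (halt : ∀ X Y : g, Ω X Y = - Ω Y X)
    (hclosed : ∀ X Y Z : g, Ω ⁅X, Y⁆ Z + Ω ⁅Y, Z⁆ X + Ω ⁅Z, X⁆ Y = 0)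
    (htame : ∀ X : g, X ≠ 0 → 0 < Ω X (J X))
    (gΩ : g → g → ℝ)
    (hgΩ : ∀ X Y : g, gΩ X Y = (Ω X (J Y) + Ω Y (J X)) / 2) :
    (∀ X Y : g, gΩ X Y = gΩ Y X) ∧
    (∀ X : g, X ≠ 0 → 0 < gΩ X X) ∧
    (∀ X Y : g, gΩ (J X) (J Y) = gΩ X Y) ∧
    (∀ X Y Z W : g, dC (bismutC gΩ J) X Y Z W = 0) :=
  hermitian_symplectic_gives_SKT_general J hJ2 hJint Ω halt hclosed htame gΩ hgΩ
end

section
/- Let g be a finite-dimensional nilpotent real Lie algebra with complex structure J whose center ξ is J-invariant, and let Ĵ be the induced complex structure on g/ξ given by Ĵ(X+ξ) = JX+ξ. Define the ascending series of (g,J) by g^J_0 = {0} and g^J_l = {X ∈ g : [X,Y] ∈ g^J_{l−1} and [JX,Y] ∈ g^J_{l−1} for all Y ∈ g}, and call J nilpotent if g^J_h = g for some h; define the analogous series and notion for (g/ξ, Ĵ). If Ĵ is nilpotent, then J is nilpotent. -/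
/-- The ascending series of a Lie algebra endowed with a map `J`:
`g^J_0 = {0}`, `g^J_{l+1} = {X | ∀ Y, [X,Y] ∈ g^J_l ∧ [JX,Y] ∈ g^J_l}`. -/
def ascSeries {g : Type*} [LieRing g] (J : g → g) : ℕ → Set g
  | 0 => {0}
  | l + 1 => {X | ∀ Y, ⁅X, Y⁆ ∈ ascSeries J l ∧ ⁅J X, Y⁆ ∈ ascSeries J l}

/-- A map `J` on a Lie algebra is nilpotent (as a complex structure) if its ascending
series exhausts the Lie algebra. -/
def IsNilpotentCx {g : Type*} [LieRing g] (J : g → g) : Prop :=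
  ∃ h : ℕ, ascSeries J h = Set.univ

/-!
Lifting along `g → g ⧸ ξ` raises the index of the ascending series by one: `X + ξ ∈ (g ⧸ ξ)^Ĵ_l`
implies `X ∈ g^J_{l+1}`, by induction on `l`, since `[X, Y]` and `[JX, Y]` project to the
corresponding brackets of `X + ξ` and `Ĵ(X + ξ)`. The base case is the `J`-invariance of `ξ`,
which puts `ξ` into `g^J_1`. So `(g ⧸ ξ)^Ĵ_h = g ⧸ ξ` gives `g^J_{h+1} = g`.
-/

open LieAlgebra LieSubmodule.Quotient

section

variable {R g : Type*} [CommRing R] [LieRing g] [LieAlgebra R g]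

theorem mem_ascSeries_one_of_mem_center {J : g → g}
    (hξ : ∀ X ∈ center R g, J X ∈ center R g) {X : g} (hX : X ∈ center R g) :
    X ∈ ascSeries J 1 := fun Y =>
  ⟨by rw [← lie_skew, hX Y, neg_zero]; rfl, by rw [← lie_skew, hξ X hX Y, neg_zero]; rfl⟩

theorem mem_ascSeries_succ_of_mk_mem {J : g → g} {Jq : g ⧸ center R g → g ⧸ center R g}
    (hξ : ∀ X ∈ center R g, J X ∈ center R g)
    (hJq : ∀ X, Jq (mk (N := center R g) X) = mk (J X)) :
    ∀ (l : ℕ) {X : g}, mk (N := center R g) X ∈ ascSeries Jq l → X ∈ ascSeries J (l + 1)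
  | 0, X, hX => mem_ascSeries_one_of_mem_center hξ (mk_eq_zero'.mp hX)
  | l + 1, X, hX => fun Y =>
    ⟨mem_ascSeries_succ_of_mk_mem hξ hJq l <| by simpa [mk_bracket] using (hX (mk Y)).1,
      mem_ascSeries_succ_of_mk_mem hξ hJq l <| by simpa [mk_bracket, hJq] using (hX (mk Y)).2⟩

theorem IsNilpotentCx.of_quotient_center {J : g → g} {Jq : g ⧸ center R g → g ⧸ center R g}
    (hξ : ∀ X ∈ center R g, J X ∈ center R g)
    (hJq : ∀ X, Jq (mk (N := center R g) X) = mk (J X)) (hquot : IsNilpotentCx Jq) :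
    IsNilpotentCx J := by
  obtain ⟨h, hh⟩ := hquot
  refine ⟨h + 1, Set.eq_univ_of_forall fun X => mem_ascSeries_succ_of_mk_mem hξ hJq h ?_⟩
  simp [hh]

end

theorem nilpotent_J_of_nilpotent_quotient_general
    {g : Type*} [LieRing g] [LieAlgebra ℝ g]
    (J : g →ₗ[ℝ] g)
    (hξ : ∀ X : g, X ∈ LieAlgebra.center ℝ g → J X ∈ LieAlgebra.center ℝ g)
    (Jq : (g ⧸ LieAlgebra.center ℝ g) →ₗ[ℝ] (g ⧸ LieAlgebra.center ℝ g))
    (hJq : ∀ X : g,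
      Jq (LieSubmodule.Quotient.mk (N := LieAlgebra.center ℝ g) X) =
        LieSubmodule.Quotient.mk (N := LieAlgebra.center ℝ g) (J X))
    (hquot : IsNilpotentCx (fun x => Jq x)) :
    IsNilpotentCx (fun X : g => J X) :=
  IsNilpotentCx.of_quotient_center hξ hJq hquot

/-- if the center `ξ` of a nilpotent Lie algebra `(g, J)` is `J`-invariant and
the induced complex structure `Ĵ` on `g ⧸ ξ` is nilpotent, then `J` is nilpotent. -/
theorem nilpotent_J_of_nilpotent_quotient
    {g : Type*} [LieRing g] [LieAlgebra ℝ g] [FiniteDimensional ℝ g]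
    [LieRing.IsNilpotent g]
    (J : g →ₗ[ℝ] g)
    (hJ2 : ∀ X : g, J (J X) = -X)
    (hJint : ∀ X Y : g, ⁅X, Y⁆ - ⁅J X, J Y⁆ + J ⁅J X, Y⁆ + J ⁅X, J Y⁆ = 0)
    (hξ : ∀ X : g, X ∈ LieAlgebra.center ℝ g → J X ∈ LieAlgebra.center ℝ g)
    (Jq : (g ⧸ LieAlgebra.center ℝ g) →ₗ[ℝ] (g ⧸ LieAlgebra.center ℝ g))
    (hJq : ∀ X : g,
      Jq (LieSubmodule.Quotient.mk (N := LieAlgebra.center ℝ g) X) =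
        LieSubmodule.Quotient.mk (N := LieAlgebra.center ℝ g) (J X))
    (hquot : IsNilpotentCx (fun x => Jq x)) :
    IsNilpotentCx (fun X : g => J X) :=
  nilpotent_J_of_nilpotent_quotient_general J hξ Jq hJq hquot
end

section
/- Let h₃^ℂ be the 6-dimensional real Lie algebra with basis e₁,…,e₆ whose only nonzero brackets among basis elements are [e₁,e₃] = e₅, [e₂,e₄] = −e₅, [e₁,e₄] = e₆, [e₂,e₃] = e₆ (the real Lie algebra underlying the 3-dimensional complex Heisenberg Lie algebra), and let g = h₃^ℂ ⊕ ℝ² (direct sum with a 2-dimensional abelian Lie algebra). Then g admits an SKT structure: there exist a complex structure J on g and a J-compatible inner product whose Bismut torsion 3-form is closed. -/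
open Module

section Bismut

variable {R g : Type*} [CommRing R] [LieRing g] [LieAlgebra R g]
  (B : g →ₗ[R] g →ₗ[R] R) (J : g → g)

theorem bismutC_lie_eq_of_mem_center (hJ : ∀ X Y : g, J ⁅X, Y⁆ ∈ LieAlgebra.center R g)
    (X Y Z W : g) : bismutC (fun a b => B a b) J ⁅X, Y⁆ Z W = -B ⁅J Z, J W⁆ ⁅X, Y⁆ := by
  have hcomm : ∀ U, ⁅U, J ⁅X, Y⁆⁆ = 0 := (LieModule.mem_maxTrivSubmodule _ _ _ _).mp (hJ X Y)
  have hcomm' : ⁅J ⁅X, Y⁆, J Z⁆ = 0 := by rw [← lie_skew, hcomm, neg_zero]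
  simp [bismutC, hcomm, hcomm']

theorem dC_bismutC_eq_of_mem_center (hJ : ∀ X Y : g, J ⁅X, Y⁆ ∈ LieAlgebra.center R g)
    (X Y Z W : g) :
    dC (bismutC (fun a b => B a b) J) X Y Z W =
      B ⁅J Z, J W⁆ ⁅X, Y⁆ - B ⁅J Y, J W⁆ ⁅X, Z⁆ + B ⁅J Y, J Z⁆ ⁅X, W⁆
        + B ⁅J X, J W⁆ ⁅Y, Z⁆ - B ⁅J X, J Z⁆ ⁅Y, W⁆ + B ⁅J X, J Y⁆ ⁅Z, W⁆ := by
  simp only [dC, bismutC_lie_eq_of_mem_center B J hJ]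
  ring

end Bismut

namespace LinearMap

variable {R M : Type*} [CommRing R] [AddCommGroup M] [Module R M]
  (B₀ : M →ₗ[R] M →ₗ[R] R) (J : M →ₗ[R] M)

theorem add_compl₁₂_comm (hB₀ : ∀ X Y, B₀ X Y = B₀ Y X) (X Y : M) :
    (B₀ + B₀.compl₁₂ J J) X Y = (B₀ + B₀.compl₁₂ J J) Y X := by
  simp [hB₀]

theorem add_compl₁₂_map_map (hJ : ∀ X, J (J X) = -X) (X Y : M) :
    (B₀ + B₀.compl₁₂ J J) (J X) (J Y) = (B₀ + B₀.compl₁₂ J J) X Y := by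
  simp [hJ, add_comm]

theorem add_compl₁₂_self_pos [LinearOrder R] [IsStrictOrderedRing R]
    (hB₀ : ∀ X, X ≠ 0 → 0 < B₀ X X) {X : M} (hX : X ≠ 0) :
    0 < (B₀ + B₀.compl₁₂ J J) X X := by
  have hJX : 0 ≤ B₀ (J X) (J X) := by
    by_cases h : J X = 0
    · simp [h]
    · exact (hB₀ _ h).le
  simpa using add_pos_of_pos_of_nonneg (hB₀ X hX) hJX

end LinearMap

namespace Module.Basis

variable {R M ι : Type*} [CommRing R] [AddCommGroup M] [Module R M] [Fintype ι] [DecidableEq ι]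
  (b : Basis ι R M)

theorem toDual_apply_eq_sum (x y : M) : b.toDual x y = ∑ i, b.repr x i * b.repr y i :=
  calc b.toDual x y = b.toDual x (∑ i, b.repr y i • b i) := by rw [b.sum_repr]
    _ = _ := by simp only [map_sum, map_smul, toDual_apply_left, smul_eq_mul, mul_comm]

theorem toDual_comm (x y : M) : b.toDual x y = b.toDual y x := by
  simp only [toDual_apply_eq_sum, mul_comm]

theorem toDual_self_pos [LinearOrder R] [IsStrictOrderedRing R] {x : M} (hx : x ≠ 0) :
    0 < b.toDual x x := by
  rw [toDual_apply_eq_sum]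
  refine lt_of_le_of_ne (Finset.sum_nonneg fun i _ => mul_self_nonneg _) fun h => hx ?_
  rw [eq_comm, Finset.sum_mul_self_eq_zero_iff] at h
  exact b.ext_elem fun i => by simpa using h i (Finset.mem_univ i)

end Module.Basis

namespace H3CPlusR2

open Matrix

/-- With `z₁ = x₀ + i x₁`, `z₂ = x₂ + i x₃` and `span(e₄, e₅) ≅ ℂ`, this is the bracket
`z₁(x) z₂(y) − z₂(x) z₁(y)` of the complex Heisenberg algebra. -/
def lieCoord (x y : Fin 8 → ℝ) : Fin 8 → ℝ :=
  ![0, 0, 0, 0, x 0 * y 2 - x 2 * y 0 - x 1 * y 3 + x 3 * y 1,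
    x 0 * y 3 - x 3 * y 0 + x 1 * y 2 - x 2 * y 1, 0, 0]

/-- The bi-invariant structure `J e₀ = e₁, J e₂ = e₃, J e₄ = e₅` is not SKT; this is a rational
solution of the integrability and SKT equations. -/
noncomputable def jMatrix : Matrix (Fin 8) (Fin 8) ℝ :=
  !![0, -1, -1, 1/2, 0, 0, 0, 0;
     0, -1, 0, 2, 0, 0, 0, 0;
     1, 1/2, 0, -3/2, 0, 0, 0, 0;
     0, -1, 0, 1, 0, 0, 0, 0;
     0, 0, 0, 0, 0, -1/2, 0, 0;
     0, 0, 0, 0, 2, 0, 0, 0;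
     0, 0, 0, 0, 0, 0, 0, -1;
     0, 0, 0, 0, 0, 0, 1, 0]

variable {g : Type*} [LieRing g] [LieAlgebra ℝ g] (e : Basis (Fin 8) ℝ g)

noncomputable def complexStructure : g →ₗ[ℝ] g := Matrix.toLin e e jMatrix

noncomputable def metric : g →ₗ[ℝ] g →ₗ[ℝ] ℝ :=
  e.toDual + e.toDual.compl₁₂ (complexStructure e) (complexStructure e)

theorem repr_lie
    (h13 : ⁅e 0, e 2⁆ = e 4) (h24 : ⁅e 1, e 3⁆ = -e 4) (h14 : ⁅e 0, e 3⁆ = e 5)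
    (h23 : ⁅e 1, e 2⁆ = e 5)
    (hzero : ∀ i j : Fin 8,
      ¬ ((i = 0 ∧ j = 2) ∨ (i = 2 ∧ j = 0) ∨ (i = 1 ∧ j = 3) ∨ (i = 3 ∧ j = 1) ∨
         (i = 0 ∧ j = 3) ∨ (i = 3 ∧ j = 0) ∨ (i = 1 ∧ j = 2) ∨ (i = 2 ∧ j = 1)) →
      ⁅e i, e j⁆ = 0)
    (X Y : g) : ⇑(e.repr ⁅X, Y⁆) = lieCoord (e.repr X) (e.repr Y) := by
  have h31 : ⁅e 2, e 0⁆ = -e 4 := by rw [← lie_skew, h13]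
  have h42 : ⁅e 3, e 1⁆ = e 4 := by rw [← lie_skew, h24, neg_neg]
  have h41 : ⁅e 3, e 0⁆ = -e 5 := by rw [← lie_skew, h14]
  have h32 : ⁅e 2, e 1⁆ = -e 5 := by rw [← lie_skew, h23]
  have hlie : ⁅X, Y⁆ = ∑ k, lieCoord (e.repr X) (e.repr Y) k • e k := by
    conv_lhs => rw [← e.sum_repr X, ← e.sum_repr Y]
    simp only [Fin.sum_univ_eight, add_lie, lie_add, smul_lie, lie_smul, h13, h24, h14, h23, h31,
      h42, h41, h32]
    simp [hzero, lieCoord]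
    module
  rw [hlie, e.repr_sum_self]

theorem repr_complexStructure (X : g) :
    ⇑(e.repr (complexStructure e X)) = jMatrix *ᵥ ⇑(e.repr X) := by
  rw [complexStructure, Matrix.toLin_apply, Basis.repr_sum_self]

theorem complexStructure_complexStructure (X : g) :
    complexStructure e (complexStructure e X) = -X := by
  refine e.ext_elem fun i => ?_
  simp only [repr_complexStructure, map_neg]
  fin_cases i <;> simp [jMatrix, mulVec, dotProduct, Fin.sum_univ_eight] <;> ring

variable {e}

theorem complexStructure_nijenhuis_eq_zero
    (he : ∀ X Y : g, ⇑(e.repr ⁅X, Y⁆) = lieCoord (e.repr X) (e.repr Y)) (X Y : g) :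
    ⁅X, Y⁆ - ⁅complexStructure e X, complexStructure e Y⁆ +
      complexStructure e ⁅complexStructure e X, Y⁆ +
      complexStructure e ⁅X, complexStructure e Y⁆ = 0 := by
  refine e.ext_elem fun i => ?_
  simp only [map_add, map_sub, Finsupp.add_apply, Finsupp.sub_apply, map_zero,
    Finsupp.coe_zero, Pi.zero_apply, repr_complexStructure, he]
  fin_cases i <;> simp [lieCoord, jMatrix, mulVec, dotProduct, Fin.sum_univ_eight] <;> ring

theorem complexStructure_lie_mem_center
    (he : ∀ X Y : g, ⇑(e.repr ⁅X, Y⁆) = lieCoord (e.repr X) (e.repr Y)) (X Y : g) :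
    complexStructure e ⁅X, Y⁆ ∈ LieAlgebra.center ℝ g := by
  refine (LieModule.mem_maxTrivSubmodule _ _ _ _).mpr fun Z => e.ext_elem fun i => ?_
  simp only [he, repr_complexStructure, map_zero, Finsupp.coe_zero, Pi.zero_apply]
  fin_cases i <;> simp [lieCoord, jMatrix, mulVec, dotProduct, Fin.sum_univ_eight]

theorem dC_bismutC_metric_eq_zero
    (he : ∀ X Y : g, ⇑(e.repr ⁅X, Y⁆) = lieCoord (e.repr X) (e.repr Y)) (X Y Z W : g) :
    dC (bismutC (fun a b => metric e a b) (complexStructure e)) X Y Z W = 0 := by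
  rw [dC_bismutC_eq_of_mem_center _ _ (complexStructure_lie_mem_center he)]
  simp only [metric, LinearMap.add_apply, LinearMap.compl₁₂_apply, Basis.toDual_apply_eq_sum,
    repr_complexStructure, he]
  simp [lieCoord, jMatrix, mulVec, dotProduct, Fin.sum_univ_eight]
  ring

end H3CPlusR2

/-- the Lie algebra `h₃^ℂ ⊕ ℝ²` (basis `e₁,…,e₈`, i.e. `e 0, …, e 7` below,
with nonzero brackets `[e₁,e₃]=e₅`, `[e₂,e₄]=−e₅`, `[e₁,e₄]=e₆`, `[e₂,e₃]=e₆`) admits an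
SKT structure: a complex structure `J` together with a `J`-compatible inner product whose
Bismut torsion 3-form is closed. -/
theorem h3C_plus_R2_admits_SKT
    {g : Type*} [LieRing g] [LieAlgebra ℝ g]
    (e : Module.Basis (Fin 8) ℝ g)
    (h13 : ⁅e 0, e 2⁆ = e 4)
    (h24 : ⁅e 1, e 3⁆ = -e 4)
    (h14 : ⁅e 0, e 3⁆ = e 5)
    (h23 : ⁅e 1, e 2⁆ = e 5)
    (hzero : ∀ i j : Fin 8,
      ¬ ((i = 0 ∧ j = 2) ∨ (i = 2 ∧ j = 0) ∨ (i = 1 ∧ j = 3) ∨ (i = 3 ∧ j = 1) ∨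
         (i = 0 ∧ j = 3) ∨ (i = 3 ∧ j = 0) ∨ (i = 1 ∧ j = 2) ∨ (i = 2 ∧ j = 1)) →
      ⁅e i, e j⁆ = 0) :
    ∃ (J : g →ₗ[ℝ] g) (B : g →ₗ[ℝ] g →ₗ[ℝ] ℝ),
      (∀ X : g, J (J X) = -X) ∧
      (∀ X Y : g, ⁅X, Y⁆ - ⁅J X, J Y⁆ + J ⁅J X, Y⁆ + J ⁅X, J Y⁆ = 0) ∧
      (∀ X Y : g, B X Y = B Y X) ∧
      (∀ X : g, X ≠ 0 → 0 < B X X) ∧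
      (∀ X Y : g, B (J X) (J Y) = B X Y) ∧
      (∀ X Y Z W : g, dC (bismutC (fun a b => B a b) J) X Y Z W = 0) := by
  have he := H3CPlusR2.repr_lie e h13 h24 h14 h23 hzero
  have hJ := H3CPlusR2.complexStructure_complexStructure e
  exact ⟨H3CPlusR2.complexStructure e, H3CPlusR2.metric e, hJ,
    H3CPlusR2.complexStructure_nijenhuis_eq_zero he,
    LinearMap.add_compl₁₂_comm _ _ e.toDual_comm,
    fun _ hX => LinearMap.add_compl₁₂_self_pos _ _ (fun _ => e.toDual_self_pos) hX,
    LinearMap.add_compl₁₂_map_map _ _ hJ, H3CPlusR2.dC_bismutC_metric_eq_zero he⟩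
end

section
/- Let h₇^Q be the 7-dimensional real quaternionic Heisenberg Lie algebra, realized as the real vector space ℍ ⊕ Im ℍ with bracket [(q,u),(q′,u′)] = (0, Im(q̄ q′) − Im(q̄′ q))/normalization, i.e. the only nonzero brackets are those of the first factor landing in the center Im ℍ via the imaginary part of q̄ q′; concretely, with basis e₁,…,e₄ of ℍ and e₅,e₆,e₇ of Im ℍ, the nonzero brackets are [e₁,e₂] = e₅, [e₃,e₄] = e₅, [e₁,e₃] = e₆, [e₄,e₂] = e₆, [e₁,e₄] = e₇, [e₂,e₃] = e₇. Let g = h₇^Q ⊕ ℝ (direct sum with a 1-dimensional abelian Lie algebra). Then g admits an SKT structure: there exist a complex structure J on g and a J-compatible inner product whose Bismut torsion 3-form is closed. -/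
open Module

namespace Module.Basis

variable {ι R M N : Type*} [Semiring R] [AddCommMonoid M] [Module R M] [AddCommMonoid N]
  [Module R N] (e : Basis ι R M)

theorem eq_zero_of_isLinearMap {f : M → N} (hf : IsLinearMap R f) (h : ∀ i, f (e i) = 0)
    (x : M) : f x = 0 :=
  LinearMap.congr_fun (e.ext (f₁ := hf.mk' f) (f₂ := 0) h) x

theorem eq_zero_of_isLinearMap₂ {f : M → M → N} (h₁ : ∀ y, IsLinearMap R (f · y))
    (h₂ : ∀ x, IsLinearMap R (f x)) (h : ∀ i j, f (e i) (e j) = 0) (x y : M) : f x y = 0 :=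
  e.eq_zero_of_isLinearMap (h₁ y) (fun i => e.eq_zero_of_isLinearMap (h₂ _) (h i) y) x

theorem eq_zero_of_isLinearMap₄ {f : M → M → M → M → N}
    (h₁ : ∀ y z w, IsLinearMap R (f · y z w)) (h₂ : ∀ x z w, IsLinearMap R (f x · z w))
    (h₃ : ∀ x y w, IsLinearMap R (f x y · w)) (h₄ : ∀ x y z, IsLinearMap R (f x y z))
    (h : ∀ i j k l, f (e i) (e j) (e k) (e l) = 0) (x y z w : M) : f x y z w = 0 :=
  e.eq_zero_of_isLinearMap₂ (fun y => h₁ y z w) (fun x => h₂ x z w)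
    (fun i j => e.eq_zero_of_isLinearMap₂ (h₃ _ _) (h₄ _ _) (h i j) z w) x y

end Module.Basis

namespace Matrix

variable {ι M : Type*} [Fintype ι] [DecidableEq ι] [AddCommGroup M] [Module ℝ M]
  (e : Basis ι ℝ M) {A : Matrix ι ι ℝ}

theorem PosDef.toBilin_pos (hA : A.PosDef) {x : M} (hx : x ≠ 0) : 0 < A.toBilin e x x := by
  rw [LinearMap.BilinForm.apply_eq_dotProduct_toMatrix_mulVec e,
    LinearMap.BilinForm.toMatrix_toBilin]
  simpa using hA.dotProduct_mulVec_pos (x := e.repr x) (by simpa using hx)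

theorem IsSymm.toBilin_comm (hA : A.IsSymm) (x y : M) : A.toBilin e x y = A.toBilin e y x :=
  ((isSymm_toBilin_iff_isSymm e).mpr hA).eq x y

end Matrix

section NijenhuisTorsion

variable {R g : Type*} [CommRing R] [LieRing g] [LieAlgebra R g] (J : g →ₗ[R] g)

def nijenhuis (X Y : g) : g := ⁅X, Y⁆ - ⁅J X, J Y⁆ + J ⁅J X, Y⁆ + J ⁅X, J Y⁆

theorem isLinearMap_nijenhuis_left (Y : g) : IsLinearMap R (nijenhuis J · Y) :=
  ⟨fun _ _ => by simp only [nijenhuis, add_lie, map_add]; abel,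
   fun _ _ => by simp only [nijenhuis, smul_lie, map_smul, smul_sub, smul_add]⟩

theorem isLinearMap_nijenhuis_right (X : g) : IsLinearMap R (nijenhuis J X) :=
  ⟨fun _ _ => by simp only [nijenhuis, lie_add, map_add]; abel,
   fun _ _ => by simp only [nijenhuis, lie_smul, map_smul, smul_sub, smul_add]⟩

variable (B : g →ₗ[R] g →ₗ[R] R)

theorem isLinearMap_dC_bismutC_1 (Y Z W : g) :
    IsLinearMap R (dC (bismutC (fun a b => B a b) J) · Y Z W) :=
  ⟨fun _ _ => by simp only [dC, bismutC, add_lie, lie_add, map_add, LinearMap.add_apply]; ring,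
   fun _ _ => by
    simp only [dC, bismutC, smul_lie, lie_smul, map_smul, LinearMap.smul_apply, smul_eq_mul]; ring⟩

theorem isLinearMap_dC_bismutC_2 (X Z W : g) :
    IsLinearMap R (dC (bismutC (fun a b => B a b) J) X · Z W) :=
  ⟨fun _ _ => by simp only [dC, bismutC, add_lie, lie_add, map_add, LinearMap.add_apply]; ring,
   fun _ _ => by
    simp only [dC, bismutC, smul_lie, lie_smul, map_smul, LinearMap.smul_apply, smul_eq_mul]; ring⟩

theorem isLinearMap_dC_bismutC_3 (X Y W : g) :
    IsLinearMap R (dC (bismutC (fun a b => B a b) J) X Y · W) :=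
  ⟨fun _ _ => by simp only [dC, bismutC, add_lie, lie_add, map_add, LinearMap.add_apply]; ring,
   fun _ _ => by
    simp only [dC, bismutC, smul_lie, lie_smul, map_smul, LinearMap.smul_apply, smul_eq_mul]; ring⟩

theorem isLinearMap_dC_bismutC_4 (X Y Z : g) :
    IsLinearMap R (dC (bismutC (fun a b => B a b) J) X Y Z) :=
  ⟨fun _ _ => by simp only [dC, bismutC, add_lie, lie_add, map_add, LinearMap.add_apply]; ring,
   fun _ _ => by
    simp only [dC, bismutC, smul_lie, lie_smul, map_smul, LinearMap.smul_apply, smul_eq_mul]; ring⟩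

theorem bismutC_zsmul_left (n : ℤ) (X Y Z : g) :
    bismutC (fun a b => B a b) J (n • X) Y Z = n * bismutC (fun a b => B a b) J X Y Z := by
  simp only [bismutC, map_zsmul, zsmul_lie, lie_zsmul, LinearMap.smul_apply, zsmul_eq_mul]
  ring

end NijenhuisTorsion

section SignedMonomial

variable {ι R g : Type*} [CommRing R] [LieRing g] [LieAlgebra R g]
  (e : Basis ι R g) (s : ι → ι → ℤ) (t : ι → ι → ι) (σ : ι → ℤ) (π : ι → ι) (w : ι → ℤ)

noncomputable def signedPermEnd : g →ₗ[R] g := e.constr R fun i => σ i • e (π i)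

theorem signedPermEnd_basis (i : ι) : signedPermEnd e σ π (e i) = σ i • e (π i) :=
  e.constr_basis R _ i

theorem signedPermEnd_signedPermEnd (hπ : Function.Involutive π)
    (hσ : ∀ i, σ i * σ (π i) = -1) (X : g) :
    signedPermEnd e σ π (signedPermEnd e σ π X) = -X := by
  have : (signedPermEnd e σ π).comp (signedPermEnd e σ π) = -LinearMap.id := e.ext fun i => by
    simp [signedPermEnd_basis, smul_smul, hπ i, hσ i]
  exact LinearMap.congr_fun this X

variable [Fintype ι] [DecidableEq ι]

noncomputable def diagForm : LinearMap.BilinForm R g :=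
  (Matrix.diagonal fun i => (w i : R)).toBilin e

theorem diagForm_basis (i j : ι) :
    diagForm e w (e i) (e j) = Matrix.diagonal (fun i => (w i : R)) i j :=
  Matrix.toLinearMap₂_apply_basis e e _ i j

theorem diagForm_signedPermEnd (hπ : Function.Involutive π) (hσ : ∀ i, σ i * σ (π i) = -1)
    (hw : ∀ i, w (π i) = w i) (X Y : g) :
    diagForm e w (signedPermEnd e σ π X) (signedPermEnd e σ π Y) = diagForm e w X Y := by
  have : (diagForm e w).compl₁₂ (signedPermEnd e σ π) (signedPermEnd e σ π) = diagForm e w :=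
    LinearMap.ext_basis e e fun i j => by
      rcases eq_or_ne i j with rfl | hij
      · obtain hσi | hσi := Int.eq_one_or_neg_one_of_mul_eq_neg_one (hσ i) <;>
          simp [signedPermEnd_basis, diagForm_basis, hσi, hw]
      · simp [signedPermEnd_basis, diagForm_basis, hπ.injective.ne hij, hij]
  exact LinearMap.congr_fun₂ this X Y

def nijenhuisCoeff (i j : ι) : ι → ℤ :=
  Pi.single (t i j) (s i j) - Pi.single (t (π i) (π j)) (σ i * σ j * s (π i) (π j))
    + Pi.single (π (t (π i) j)) (σ i * s (π i) j * σ (t (π i) j))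
    + Pi.single (π (t i (π j))) (σ j * s i (π j) * σ (t i (π j)))

variable {e s t}

theorem nijenhuis_signedPermEnd_basis (hbr : ∀ i j, ⁅e i, e j⁆ = s i j • e (t i j)) (i j : ι) :
    nijenhuis (signedPermEnd e σ π) (e i) (e j) =
      Fintype.linearCombination ℤ e (nijenhuisCoeff s t σ π i j) := by
  simp only [nijenhuis, nijenhuisCoeff, hbr, signedPermEnd_basis, lie_smul, smul_lie, smul_smul,
    map_zsmul, map_add, map_sub, Fintype.linearCombination_apply_single]
  module

theorem nijenhuis_signedPermEnd_eq_zero (hbr : ∀ i j, ⁅e i, e j⁆ = s i j • e (t i j))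
    (h : ∀ i j, nijenhuisCoeff s t σ π i j = 0) (X Y : g) :
    nijenhuis (signedPermEnd e σ π) X Y = 0 :=
  e.eq_zero_of_isLinearMap₂ (isLinearMap_nijenhuis_left _) (isLinearMap_nijenhuis_right _)
    (fun i j => by rw [nijenhuis_signedPermEnd_basis σ π hbr, h, map_zero]) X Y

variable (s t)

def torsionPairing (a b c : ι) : ℤ :=
  σ a * σ b * s (π a) (π b) * if t (π a) (π b) = c then w c else 0

def torsionCoeff (a b c : ι) : ℤ :=
  -torsionPairing s t σ π w a b c - torsionPairing s t σ π w b c a - torsionPairing s t σ π w c a b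

def dTorsionCoeff (i j k l : ι) : ℤ :=
  -s i j * torsionCoeff s t σ π w (t i j) k l + s i k * torsionCoeff s t σ π w (t i k) j l
    - s i l * torsionCoeff s t σ π w (t i l) j k - s j k * torsionCoeff s t σ π w (t j k) i l
    + s j l * torsionCoeff s t σ π w (t j l) i k - s k l * torsionCoeff s t σ π w (t k l) i j

variable {s t}

theorem diagForm_lie_signedPermEnd_basis (hbr : ∀ i j, ⁅e i, e j⁆ = s i j • e (t i j))
    (a b c : ι) :
    diagForm e w ⁅signedPermEnd e σ π (e a), signedPermEnd e σ π (e b)⁆ (e c) =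
      torsionPairing s t σ π w a b c := by
  simp only [torsionPairing, signedPermEnd_basis, zsmul_lie, lie_zsmul, hbr, map_zsmul,
    LinearMap.smul_apply, diagForm_basis, Matrix.diagonal_apply, zsmul_eq_mul]
  split_ifs with h
  · subst h; push_cast; ring
  · simp

theorem bismutC_signedPermEnd_basis (hbr : ∀ i j, ⁅e i, e j⁆ = s i j • e (t i j)) (a b c : ι) :
    bismutC (fun X Y => diagForm e w X Y) (signedPermEnd e σ π) (e a) (e b) (e c) =
      torsionCoeff s t σ π w a b c := by
  simp only [bismutC, diagForm_lie_signedPermEnd_basis σ π w hbr, torsionCoeff]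
  push_cast
  ring

theorem dC_bismutC_signedPermEnd_basis (hbr : ∀ i j, ⁅e i, e j⁆ = s i j • e (t i j))
    (i j k l : ι) :
    dC (bismutC (fun X Y => diagForm e w X Y) (signedPermEnd e σ π)) (e i) (e j) (e k) (e l) =
      dTorsionCoeff s t σ π w i j k l := by
  simp only [dC, hbr, bismutC_zsmul_left, bismutC_signedPermEnd_basis σ π w hbr, dTorsionCoeff]
  push_cast
  ring

theorem dC_bismutC_signedPermEnd_eq_zero (hbr : ∀ i j, ⁅e i, e j⁆ = s i j • e (t i j))
    (h : ∀ i j k l, dTorsionCoeff s t σ π w i j k l = 0) (X Y Z W : g) :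
    dC (bismutC (fun X Y => diagForm e w X Y) (signedPermEnd e σ π)) X Y Z W = 0 :=
  e.eq_zero_of_isLinearMap₄ (isLinearMap_dC_bismutC_1 _ _) (isLinearMap_dC_bismutC_2 _ _)
    (isLinearMap_dC_bismutC_3 _ _) (isLinearMap_dC_bismutC_4 _ _)
    (fun i j k l => by rw [dC_bismutC_signedPermEnd_basis σ π w hbr, h, Int.cast_zero]) X Y Z W

end SignedMonomial

namespace H7QPlusR

def bracketSign : Fin 8 → Fin 8 → ℤ :=
  ![![ 0,  1,  1,  1, 0, 0, 0, 0],
    ![-1,  0,  1, -1, 0, 0, 0, 0],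
    ![-1, -1,  0,  1, 0, 0, 0, 0],
    ![-1,  1, -1,  0, 0, 0, 0, 0],
    0, 0, 0, 0]

def bracketIndex : Fin 8 → Fin 8 → Fin 8 :=
  ![![0, 4, 5, 6, 0, 0, 0, 0],
    ![4, 0, 6, 5, 0, 0, 0, 0],
    ![5, 6, 0, 4, 0, 0, 0, 0],
    ![6, 5, 4, 0, 0, 0, 0, 0],
    0, 0, 0, 0]

def jIndex : Fin 8 → Fin 8 := ![1, 0, 3, 2, 7, 6, 5, 4]

def jSign : Fin 8 → ℤ := ![1, -1, 1, -1, 1, 1, -1, -1]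

def weight : Fin 8 → ℤ := ![1, 1, 1, 1, 2, 1, 1, 2]

theorem jIndex_involutive : Function.Involutive jIndex := by
  unfold Function.Involutive; decide

theorem jSign_mul_jSign_jIndex : ∀ i, jSign i * jSign (jIndex i) = -1 := by decide

theorem weight_jIndex : ∀ i, weight (jIndex i) = weight i := by decide

theorem weight_pos : ∀ i, 0 < weight i := by decide

theorem nijenhuisCoeff_eq_zero :
    ∀ i j, nijenhuisCoeff bracketSign bracketIndex jSign jIndex i j = 0 := by
  decide

theorem dTorsionCoeff_eq_zero :
    ∀ i j k l, dTorsionCoeff bracketSign bracketIndex jSign jIndex weight i j k l = 0 := by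
  decide

end H7QPlusR

open H7QPlusR in
/-- the Lie algebra `h₇^Q ⊕ ℝ` (basis `e₁,…,e₈`, i.e. `e 0, …, e 7` below,
with nonzero brackets `[e₁,e₂]=e₅`, `[e₃,e₄]=e₅`, `[e₁,e₃]=e₆`, `[e₄,e₂]=e₆`,
`[e₁,e₄]=e₇`, `[e₂,e₃]=e₇`) admits an SKT structure: a complex structure `J` together with
a `J`-compatible inner product whose Bismut torsion 3-form is closed. -/
theorem h7Q_plus_R_admits_SKT
    {g : Type*} [LieRing g] [LieAlgebra ℝ g]
    (e : Module.Basis (Fin 8) ℝ g)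
    (h12 : ⁅e 0, e 1⁆ = e 4)
    (h34 : ⁅e 2, e 3⁆ = e 4)
    (h13 : ⁅e 0, e 2⁆ = e 5)
    (h42 : ⁅e 3, e 1⁆ = e 5)
    (h14 : ⁅e 0, e 3⁆ = e 6)
    (h23 : ⁅e 1, e 2⁆ = e 6)
    (hzero : ∀ i j : Fin 8,
      ¬ ((i = 0 ∧ j = 1) ∨ (i = 1 ∧ j = 0) ∨ (i = 2 ∧ j = 3) ∨ (i = 3 ∧ j = 2) ∨
         (i = 0 ∧ j = 2) ∨ (i = 2 ∧ j = 0) ∨ (i = 3 ∧ j = 1) ∨ (i = 1 ∧ j = 3) ∨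
         (i = 0 ∧ j = 3) ∨ (i = 3 ∧ j = 0) ∨ (i = 1 ∧ j = 2) ∨ (i = 2 ∧ j = 1)) →
      ⁅e i, e j⁆ = 0) :
    ∃ (J : g →ₗ[ℝ] g) (B : g →ₗ[ℝ] g →ₗ[ℝ] ℝ),
      (∀ X : g, J (J X) = -X) ∧
      (∀ X Y : g, ⁅X, Y⁆ - ⁅J X, J Y⁆ + J ⁅J X, Y⁆ + J ⁅X, J Y⁆ = 0) ∧
      (∀ X Y : g, B X Y = B Y X) ∧
      (∀ X : g, X ≠ 0 → 0 < B X X) ∧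
      (∀ X Y : g, B (J X) (J Y) = B X Y) ∧
      (∀ X Y Z W : g, dC (bismutC (fun a b => B a b) J) X Y Z W = 0) := by
  have h21 : ⁅e 1, e 0⁆ = -e 4 := by rw [← lie_skew, h12]
  have h43 : ⁅e 3, e 2⁆ = -e 4 := by rw [← lie_skew, h34]
  have h31 : ⁅e 2, e 0⁆ = -e 5 := by rw [← lie_skew, h13]
  have h24 : ⁅e 1, e 3⁆ = -e 5 := by rw [← lie_skew, h42]
  have h41 : ⁅e 3, e 0⁆ = -e 6 := by rw [← lie_skew, h14]
  have h32 : ⁅e 2, e 1⁆ = -e 6 := by rw [← lie_skew, h23]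
  have hbr : ∀ i j, ⁅e i, e j⁆ = bracketSign i j • e (bracketIndex i j) := by
    intro i j
    fin_cases i <;> fin_cases j <;>
      simp [bracketSign, bracketIndex, h12, h34, h13, h42, h14, h23, h21, h43, h31, h24, h41, h32,
        hzero]
  refine ⟨signedPermEnd e jSign jIndex, diagForm e weight,
    signedPermEnd_signedPermEnd e _ _ jIndex_involutive jSign_mul_jSign_jIndex,
    nijenhuis_signedPermEnd_eq_zero _ _ hbr nijenhuisCoeff_eq_zero,
    (Matrix.isSymm_diagonal _).toBilin_comm e,
    fun X hX => (Matrix.PosDef.diagonal fun i => by exact_mod_cast weight_pos i).toBilin_pos e hX,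
    diagForm_signedPermEnd e _ _ _ jIndex_involutive jSign_mul_jSign_jIndex weight_jIndex,
    dC_bismutC_signedPermEnd_eq_zero _ _ _ hbr dTorsionCoeff_eq_zero⟩
end
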